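/- arXiv:2507.16221 — 10 statements merged into one kernel-verified Lean document; each statement's English description precedes it below -/
import Mathlib

section
/- Let N ≥ 2 and let A_1,…,A_N be finite nonempty sets with 𝒜 := ∏_{k=1}^N A_k, and let s_j : 𝒜 → ℝ. Define B(a) := s_j(a_1) − s_j(a_2) for a = (a_1, a_2) ∈ 𝒜 × 𝒜. Then a fair zero-determinant strategy of player (1,j) exists if and only if B is not identically zero and there exist two distinct actions ā_j, a̲_j ∈ A_j such that B((ā_j, a_{(1,−j)}), a_2) ≥ 0 and B((a̲_j, a_{(1,−j)}), a_2) ≤ 0 for every a_{(1,−j)} ∈ A_{−j} and every a_2 ∈ 𝒜. -/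
/-- existence condition of a fair zero-determinant strategy of player
`(1, j)` in terms of the payoff-difference function `B(a) = s_j(a_1) - s_j(a_2)`. -/
theorem fairZD_exists_iff_two_actions
    {N : ℕ} (hN : 2 ≤ N) (A : Fin N → Type*)
    [∀ k, Fintype (A k)] [∀ k, Nonempty (A k)]
    (j : Fin N) (s : (∀ k, A k) → ℝ) :
    (∃ (T : ((∀ k, A k) × (∀ k, A k)) → A j → ℝ) (c : A j → ℝ),
      (∀ a' x, 0 ≤ T a' x) ∧
      (∀ a', ∑ x, T a' x = 1) ∧
      (∀ a' : ((∀ k, A k) × (∀ k, A k)),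
        (∑ x, c x * T a' x) - c (a'.1 j) = s a'.1 - s a'.2) ∧
      ¬ (∀ a' : ((∀ k, A k) × (∀ k, A k)), s a'.1 - s a'.2 = 0)) ↔
    (¬ (∀ a' : ((∀ k, A k) × (∀ k, A k)), s a'.1 - s a'.2 = 0) ∧
      ∃ abar aund : A j, abar ≠ aund ∧
        (∀ (a1 a2 : ∀ k, A k), 0 ≤ s (Function.update a1 j abar) - s a2) ∧
        (∀ (a1 a2 : ∀ k, A k), s (Function.update a1 j aund) - s a2 ≤ 0)) := by
  classical
  constructor
  · rintro ⟨T, c, hT0, hT1, heq, hne⟩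
    refine ⟨hne, ?_⟩
    obtain ⟨abar, -, hmin⟩ := Finset.exists_min_image Finset.univ c
      ⟨Classical.arbitrary _, Finset.mem_univ _⟩
    obtain ⟨aund, -, hmax⟩ := Finset.exists_max_image Finset.univ c
      ⟨Classical.arbitrary _, Finset.mem_univ _⟩
    have hneq : abar ≠ aund := by
      intro h
      apply hne
      intro a'
      have hconst : ∀ x, c x = c abar := fun x =>
        le_antisymm (h ▸ hmax x (Finset.mem_univ x)) (hmin x (Finset.mem_univ x))
      have h1 := heq a'
      have hsum : (∑ x, c x * T a' x) = c abar := by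
        rw [Finset.sum_congr rfl (fun x _ => by rw [hconst x]), ← Finset.mul_sum,
          hT1 a', mul_one]
      rw [hsum, hconst (a'.1 j)] at h1
      linarith
    refine ⟨abar, aund, hneq, ?_, ?_⟩
    · intro a1 a2
      set a' : (∀ k, A k) × (∀ k, A k) := (Function.update a1 j abar, a2) with ha'
      have hj : a'.1 j = abar := Function.update_self j abar a1
      have h1 := heq a'
      have h2 : c abar * 1 ≤ ∑ x, c x * T a' x := by
        rw [← hT1 a', Finset.mul_sum]
        exact Finset.sum_le_sum fun x _ =>
          mul_le_mul_of_nonneg_right (hmin x (Finset.mem_univ x)) (hT0 a' x)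
      rw [hj] at h1
      have : s a'.1 = s (Function.update a1 j abar) := rfl
      linarith
    · intro a1 a2
      set a' : (∀ k, A k) × (∀ k, A k) := (Function.update a1 j aund, a2) with ha'
      have hj : a'.1 j = aund := Function.update_self j aund a1
      have h1 := heq a'
      have h2 : (∑ x, c x * T a' x) ≤ c aund * 1 := by
        rw [← hT1 a', Finset.mul_sum]
        exact Finset.sum_le_sum fun x _ =>
          mul_le_mul_of_nonneg_right (hmax x (Finset.mem_univ x)) (hT0 a' x)
      rw [hj] at h1
      linarith
  · rintro ⟨hne, abar, aund, hneq, habar, haund⟩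
    set B : ((∀ k, A k) × (∀ k, A k)) → ℝ := fun a' => s a'.1 - s a'.2 with hB
    set K : ℝ := 1 + ∑ a' : ((∀ k, A k) × (∀ k, A k)), |B a'| with hK
    have hKb : ∀ a', |B a'| ≤ K - 1 := by
      intro a'
      have : |B a'| ≤ ∑ b : ((∀ k, A k) × (∀ k, A k)), |B b| :=
        Finset.single_le_sum (f := fun b => |B b|) (fun b _ => abs_nonneg _)
          (Finset.mem_univ a')
      simp only [hK]; linarith
    have hKpos : (0:ℝ) < K := by
      have := hKb (Classical.arbitrary _)
      have := abs_nonneg (B (Classical.arbitrary _))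
      linarith
    set c : A j → ℝ := fun x => if x = abar then -K else if x = aund then K else 0
      with hc
    have hcabar : c abar = -K := by simp [hc]
    have hcaund : c aund = K := by simp [hc, Ne.symm hneq]
    have hbound : ∀ a' : ((∀ k, A k) × (∀ k, A k)),
        -K ≤ c (a'.1 j) + B a' ∧ c (a'.1 j) + B a' ≤ K := by
      intro a'
      have habs := hKb a'
      have h1 := abs_le.mp habs
      by_cases h : a'.1 j = abar
      · have hup : Function.update a'.1 j abar = a'.1 := by
          rw [← h, Function.update_eq_self]
        have hBge : 0 ≤ B a' := by
          have := habar a'.1 a'.2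
          rw [hup] at this
          exact this
        rw [h, hcabar]
        constructor <;> linarith [h1.1, h1.2]
      · by_cases h2 : a'.1 j = aund
        · have hup : Function.update a'.1 j aund = a'.1 := by
            rw [← h2, Function.update_eq_self]
          have hBle : B a' ≤ 0 := by
            have := haund a'.1 a'.2
            rw [hup] at this
            exact this
          rw [h2, hcaund]
          constructor <;> linarith [h1.1, h1.2]
        · simp only [hc, if_neg h, if_neg h2]
          constructor <;> linarith [h1.1, h1.2]
    set p : ((∀ k, A k) × (∀ k, A k)) → ℝ :=
      fun a' => (K - c (a'.1 j) - B a') / (2 * K) with hp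
    have hK0 : (2 * K) ≠ 0 := by positivity
    have hp0 : ∀ a', 0 ≤ p a' := by
      intro a'
      have := (hbound a').2
      apply div_nonneg _ (by linarith)
      linarith
    have hp1 : ∀ a', p a' ≤ 1 := by
      intro a'
      have := (hbound a').1
      rw [div_le_one (by linarith)]
      linarith
    refine ⟨fun a' x => p a' * (if x = abar then 1 else 0)
        + (1 - p a') * (if x = aund then 1 else 0), c, ?_, ?_, ?_, hne⟩
    · intro a' x
      have h0 := hp0 a'
      have h1 := hp1 a'
      dsimp only
      split_ifs <;> nlinarith
    · intro a'
      rw [Finset.sum_add_distrib, ← Finset.mul_sum, ← Finset.mul_sum,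
        Finset.sum_ite_eq' Finset.univ abar (fun _ => (1:ℝ)),
        Finset.sum_ite_eq' Finset.univ aund (fun _ => (1:ℝ))]
      simp
    · intro a'
      have hsum : (∑ x, c x * (p a' * (if x = abar then 1 else 0)
          + (1 - p a') * (if x = aund then 1 else 0)))
          = c abar * p a' + c aund * (1 - p a') := by
        have : ∀ x, c x * (p a' * (if x = abar then 1 else 0)
            + (1 - p a') * (if x = aund then 1 else 0))
            = (if x = abar then c x * p a' else 0)
            + (if x = aund then c x * (1 - p a') else 0) := by
          intro x
          split_ifs <;> ring
        rw [Finset.sum_congr rfl fun x _ => this x, Finset.sum_add_distrib,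
          Finset.sum_ite_eq' Finset.univ abar (fun x => c x * p a'),
          Finset.sum_ite_eq' Finset.univ aund (fun x => c x * (1 - p a'))]
        simp
      rw [hsum]
      rw [hcabar, hcaund]
      have : p a' = (K - c (a'.1 j) - B a') / (2 * K) := rfl
      rw [this]
      field_simp
      ring
end

section
/- Let N ≥ 2 and let A_1,…,A_N be finite nonempty sets with 𝒜 := ∏_{k=1}^N A_k, and let s_j : 𝒜 → ℝ. A fair zero-determinant strategy of player (1,j) exists if and only if the stage game is a nontrivial weakly payoff-monotonic game for player (1,j). -/
open Finset

/-- Theorem 1 of the paper: a fair zero-determinant strategy of player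
`(1, j)` exists iff the stage game is a nontrivial weakly payoff-monotonic game for
player `(1, j)`. -/
theorem fairZD_exists_iff_nontrivial_weakly_payoff_monotonic
    {N : ℕ} (hN : 2 ≤ N) (A : Fin N → Type*)
    [∀ k, Fintype (A k)] [∀ k, Nonempty (A k)]
    (j : Fin N) (s : (∀ k, A k) → ℝ) :
    (∃ (T : ((∀ k, A k) × (∀ k, A k)) → A j → ℝ) (c : A j → ℝ),
      (∀ a' x, 0 ≤ T a' x) ∧
      (∀ a', ∑ x, T a' x = 1) ∧
      (∀ a' : ((∀ k, A k) × (∀ k, A k)),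
        (∑ x, c x * T a' x) - c (a'.1 j) = s a'.1 - s a'.2) ∧
      ¬ (∀ a' : ((∀ k, A k) × (∀ k, A k)), s a'.1 - s a'.2 = 0)) ↔
    ((∃ (aH aL : A j) (rH rL : ℝ), rL ≤ rH ∧
        (∀ a : ∀ k, A k, s (Function.update a j aH) = rH) ∧
        (∀ a : ∀ k, A k, s (Function.update a j aL) = rL) ∧
        (∀ b : ∀ k, A k, rL ≤ s b ∧ s b ≤ rH)) ∧
      ¬ (∀ b b' : ∀ k, A k, s b = s b')) := by
  classical
  have b0 : ∀ k, A k := Classical.arbitrary _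
  constructor
  · rintro ⟨T, c, hTpos, hTsum, heq, hnz⟩
    obtain ⟨xm, -, hxm⟩ := Finset.exists_min_image Finset.univ c Finset.univ_nonempty
    obtain ⟨xM, -, hxM⟩ := Finset.exists_max_image Finset.univ c Finset.univ_nonempty
    have key_min : ∀ a1 a2 : (∀ k, A k), a1 j = xm → s a2 ≤ s a1 := by
      intro a1 a2 h1
      have he := heq (a1, a2)
      simp only [h1] at he
      have hlow : c xm ≤ ∑ x, c x * T (a1, a2) x := by
        calc c xm = ∑ x, c xm * T (a1, a2) x := by
              rw [← Finset.mul_sum, hTsum, mul_one]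
          _ ≤ ∑ x, c x * T (a1, a2) x :=
              Finset.sum_le_sum fun x _ =>
                mul_le_mul_of_nonneg_right (hxm x (mem_univ x)) (hTpos _ x)
      linarith
    have key_max : ∀ a1 a2 : (∀ k, A k), a1 j = xM → s a1 ≤ s a2 := by
      intro a1 a2 h1
      have he := heq (a1, a2)
      simp only [h1] at he
      have hhigh : ∑ x, c x * T (a1, a2) x ≤ c xM := by
        calc ∑ x, c x * T (a1, a2) x
            ≤ ∑ x, c xM * T (a1, a2) x :=
              Finset.sum_le_sum fun x _ =>
                mul_le_mul_of_nonneg_right (hxM x (mem_univ x)) (hTpos _ x)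
          _ = c xM := by rw [← Finset.mul_sum, hTsum, mul_one]
      linarith
    have hupd : ∀ (b : ∀ k, A k) (x : A j), (Function.update b j x) j = x :=
      fun b x => Function.update_self j x b
    refine ⟨⟨xm, xM, s (Function.update b0 j xm), s (Function.update b0 j xM),
        key_min _ _ (hupd b0 xm), ?_, ?_, ?_⟩, ?_⟩
    · intro a
      exact le_antisymm (key_min _ _ (hupd b0 xm)) (key_min _ _ (hupd a xm))
    · intro a
      exact le_antisymm (key_max _ _ (hupd a xM)) (key_max _ _ (hupd b0 xM))
    · intro b
      exact ⟨key_max _ b (hupd b0 xM), key_min _ b (hupd b0 xm)⟩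
    · intro hc
      exact hnz fun a' => sub_eq_zero.mpr (hc _ _)
  · rintro ⟨⟨aH, aL, rH, rL, hle, hH, hL, hbd⟩, hnc⟩
    push_neg at hnc
    obtain ⟨b1, b2, hb⟩ := hnc
    have hlt : rL < rH := by
      rcases hle.lt_or_eq with h | h
      · exact h
      · exfalso; apply hb; have := hbd b1; have := hbd b2; linarith
    have hd : (0:ℝ) < rH - rL := by linarith
    set m : A j → ℝ :=
      fun x => Finset.univ.inf' Finset.univ_nonempty (fun b => s (Function.update b j x)) with hm
    set M : A j → ℝ :=
      fun x => Finset.univ.sup' Finset.univ_nonempty (fun b => s (Function.update b j x)) with hM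
    set c : A j → ℝ := fun x => -(m x + M x) with hc
    have hm_le : ∀ (x : A j) (b : ∀ k, A k), m x ≤ s (Function.update b j x) :=
      fun x b => Finset.inf'_le _ (mem_univ b)
    have hM_ge : ∀ (x : A j) (b : ∀ k, A k), s (Function.update b j x) ≤ M x :=
      fun x b => Finset.le_sup' (fun b => s (Function.update b j x)) (mem_univ b)
    have hmrL : ∀ x, rL ≤ m x := fun x => Finset.le_inf' _ _ fun b _ => (hbd _).1
    have hMrH : ∀ x, M x ≤ rH := fun x => Finset.sup'_le _ _ fun b _ => (hbd _).2
    have hmH : m aH = rH :=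
      le_antisymm ((hm_le aH b0).trans (hH b0).le) (Finset.le_inf' _ _ fun b _ => (hH b).ge)
    have hMH : M aH = rH :=
      le_antisymm (Finset.sup'_le _ _ fun b _ => (hH b).le) ((hH b0) ▸ hM_ge aH b0)
    have hmL : m aL = rL :=
      le_antisymm ((hm_le aL b0).trans (hL b0).le) (Finset.le_inf' _ _ fun b _ => (hL b).ge)
    have hML : M aL = rL :=
      le_antisymm (Finset.sup'_le _ _ fun b _ => (hL b).le) ((hL b0) ▸ hM_ge aL b0)
    have hcH : c aH = -(rH + rH) := by rw [hc]; simp only [hmH, hMH]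
    have hcL : c aL = -(rL + rL) := by rw [hc]; simp only [hmL, hML]
    have haHL : aH ≠ aL := by
      intro h
      rw [h, hcL] at hcH
      linarith
    have hs_ub : ∀ a1 : ∀ k, A k, s a1 ≤ M (a1 j) := by
      intro a1
      have := hM_ge (a1 j) a1
      rwa [Function.update_eq_self] at this
    have hs_lb : ∀ a1 : ∀ k, A k, m (a1 j) ≤ s a1 := by
      intro a1
      have := hm_le (a1 j) a1
      rwa [Function.update_eq_self] at this
    have hvlow : ∀ a' : ((∀ k, A k) × (∀ k, A k)),
        -(rH + rH) ≤ c (a'.1 j) + s a'.1 - s a'.2 := by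
      intro a'
      have h1 := hs_lb a'.1
      have h2 := (hbd a'.2).2
      have h3 := hMrH (a'.1 j)
      simp only [hc]
      linarith
    have hvhigh : ∀ a' : ((∀ k, A k) × (∀ k, A k)),
        c (a'.1 j) + s a'.1 - s a'.2 ≤ -(rL + rL) := by
      intro a'
      have h1 := hs_ub a'.1
      have h2 := (hbd a'.2).1
      have h3 := hmrL (a'.1 j)
      simp only [hc]
      linarith
    set p : ((∀ k, A k) × (∀ k, A k)) → ℝ :=
      fun a' => (-(rL + rL) - (c (a'.1 j) + s a'.1 - s a'.2)) / (2 * (rH - rL)) with hp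
    have hp0 : ∀ a', 0 ≤ p a' := by
      intro a'
      apply div_nonneg
      · linarith [hvhigh a']
      · linarith
    have hp1 : ∀ a', p a' ≤ 1 := by
      intro a'
      rw [hp]
      rw [div_le_one (by linarith)]
      linarith [hvlow a']
    refine ⟨fun a' x => (if x = aH then p a' else 0) + (if x = aL then 1 - p a' else 0),
        c, ?_, ?_, ?_, ?_⟩
    · intro a' x
      have := hp0 a'
      have := hp1 a'
      dsimp only
      split_ifs <;> linarith
    · intro a'
      rw [Finset.sum_add_distrib]
      rw [Finset.sum_ite_eq' Finset.univ aH (fun _ => p a'),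
        Finset.sum_ite_eq' Finset.univ aL (fun _ => 1 - p a')]
      simp
    · intro a'
      have hsum : ∑ x, c x * ((if x = aH then p a' else 0) + (if x = aL then 1 - p a' else 0))
          = c aH * p a' + c aL * (1 - p a') := by
        simp only [mul_add, Finset.sum_add_distrib, mul_ite, mul_zero]
        rw [Finset.sum_ite_eq' Finset.univ aH (fun x => c x * p a'),
          Finset.sum_ite_eq' Finset.univ aL (fun x => c x * (1 - p a'))]
        simp
      rw [hsum, hcH, hcL, hp]
      field_simp
      ring
    · intro h
      exact hb (sub_eq_zero.mp (h (b1, b2)))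
end

section
/- Let N ≥ 2 and let A_1,…,A_N be finite nonempty sets with 𝒜 := ∏_{k=1}^N A_k, and let s_j : 𝒜 → ℝ. The Imitate-If-Better strategy of player (1,j) is unbeatable against player (2,j) — i.e. for every play consistent with IIB, liminf_{T→∞} (1/T) ∑_{t=1}^T (s_j(a^{(t)}_1) − s_j(a^{(t)}_2)) ≥ 0 — if and only if the stage game is a strongly payoff-monotonic game for player (1,j). -/
/-!
If player `j`'s payoff depends only on its own action, say `s b = r (b j)`, then under
Imitate-If-Better each round's payoff difference is at least the drop `r (x t) - r (x (t + 1))`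
of player `(1, j)`'s own payoff `r (x t)`; the sums telescope, so partial sums are bounded
below and the averages have nonnegative liminf. Conversely, if two profiles `b`, `b'` agree in
coordinate `j` but `s b < s b'`, the constant play `(b, b')` is consistent with
Imitate-If-Better (imitation does not change player `(1, j)`'s action) and loses `s b' - s b`
every round.
-/

open Filter Finset Function Topology

theorem zero_le_liminf_average_of_le_sum {d : ℕ → ℝ} {C M : ℝ}
    (hC : ∀ T, C ≤ ∑ t ∈ range T, d t) (hM : ∀ t, d t ≤ M) :
    0 ≤ liminf (fun T : ℕ => (∑ t ∈ range T, d t) / T) atTop := by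
  have hcobdd : IsCoboundedUnder (· ≥ ·) atTop (fun T : ℕ => (∑ t ∈ range T, d t) / T) := by
    refine isCoboundedUnder_ge_of_eventually_le atTop (x := M) ?_
    filter_upwards [eventually_gt_atTop 0] with T hT
    rw [div_le_iff₀ (by positivity)]
    simpa [mul_comm] using sum_le_sum fun t (_ : t ∈ range T) => hM t
  have hlower : Tendsto (fun T : ℕ => C / T) atTop (𝓝 0) :=
    tendsto_const_nhds.div_atTop tendsto_natCast_atTop_atTop
  calc 0 = liminf (fun T : ℕ => C / T) atTop := hlower.liminf_eq.symm
    _ ≤ _ := liminf_le_liminf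
      (.of_forall fun T => div_le_div_of_nonneg_right (hC T) T.cast_nonneg)
      hlower.isBoundedUnder_ge hcobdd

theorem liminf_average_const (c : ℝ) :
    liminf (fun T : ℕ => (∑ _t ∈ range T, c) / T) atTop = c := by
  refine (tendsto_const_nhds.congr' ?_).liminf_eq
  filter_upwards [eventually_gt_atTop 0] with T hT
  rw [sum_const, card_range, nsmul_eq_mul]
  field_simp

section ImitateIfBetter

variable {ι : Type*} {A : ι → Type*}

/-- `a t` is the pair of profiles played in round `t + 1` of the two parallel games. -/
def IsIIBPlay (s : (∀ k, A k) → ℝ) (j : ι) (a : ℕ → (∀ k, A k) × (∀ k, A k)) : Prop :=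
  ∀ t, (a (t + 1)).1 j = if s (a t).1 < s (a t).2 then (a t).2 j else (a t).1 j

def IIBUnbeatable (s : (∀ k, A k) → ℝ) (j : ι) : Prop :=
  ∀ a, IsIIBPlay s j a →
    0 ≤ liminf (fun T : ℕ => (∑ t ∈ range T, (s (a t).1 - s (a t).2)) / T) atTop

variable {s : (∀ k, A k) → ℝ} {j : ι}

theorem isIIBPlay_const {b b' : ∀ k, A k} (h : b j = b' j) :
    IsIIBPlay s j fun _ => (b, b') := by
  intro t
  split_ifs
  exacts [h, rfl]

theorem IIBUnbeatable.factorsThrough (hs : IIBUnbeatable s j) :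
    FactorsThrough s fun b => b j := by
  have hle : ∀ b b' : ∀ k, A k, b j = b' j → s b' ≤ s b := fun b b' h => by
    have := hs _ (isIIBPlay_const (s := s) h)
    rw [liminf_average_const] at this
    linarith
  exact fun b b' h => le_antisymm (hle b' b h.symm) (hle b b' h)

theorem IsIIBPlay.sub_le_payoff_sub {a : ℕ → (∀ k, A k) × (∀ k, A k)} (ha : IsIIBPlay s j a)
    {r : A j → ℝ} (hr : ∀ b, s b = r (b j)) (t : ℕ) :
    r ((a t).1 j) - r ((a (t + 1)).1 j) ≤ s (a t).1 - s (a t).2 := by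
  rw [ha t, hr, hr]
  split_ifs with hlt
  · exact le_rfl
  · linarith [not_lt.1 hlt]

theorem iibUnbeatable_of_factorsThrough [Finite (A j)] (hs : FactorsThrough s fun b => b j) :
    IIBUnbeatable s j := by
  obtain ⟨r, hr⟩ : ∃ r : A j → ℝ, ∀ b, s b = r (b j) := by
    simpa [funext_iff] using (factorsThrough_iff s).1 hs
  obtain ⟨M, hM⟩ := (Set.finite_range r).bddAbove
  obtain ⟨m, hm⟩ := (Set.finite_range r).bddBelow
  intro a ha
  refine zero_le_liminf_average_of_le_sum (C := r ((a 0).1 j) - M) (M := M - m) (fun T => ?_)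
    (fun t => ?_)
  · calc r ((a 0).1 j) - M ≤ r ((a 0).1 j) - r ((a T).1 j) := by
          linarith [hM ⟨(a T).1 j, rfl⟩]
      _ = ∑ t ∈ range T, (r ((a t).1 j) - r ((a (t + 1)).1 j)) :=
          (sum_range_sub' (fun t => r ((a t).1 j)) T).symm
      _ ≤ _ := sum_le_sum fun t _ => ha.sub_le_payoff_sub hr t
  · rw [hr, hr]
    linarith [hM ⟨(a t).1 j, rfl⟩, hm ⟨(a t).2 j, rfl⟩]

theorem iibUnbeatable_iff_factorsThrough [Finite (A j)] :
    IIBUnbeatable s j ↔ FactorsThrough s fun b => b j :=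
  ⟨IIBUnbeatable.factorsThrough, iibUnbeatable_of_factorsThrough⟩

end ImitateIfBetter

theorem IIB_unbeatable_iff_strongly_payoff_monotonic_general
    {N : ℕ} (A : Fin N → Type*)
    [∀ k, Fintype (A k)]
    (j : Fin N) (s : (∀ k, A k) → ℝ) :
    (∀ a : ℕ → ((∀ k, A k) × (∀ k, A k)),
      (∀ t, (a (t + 1)).1 j =
          if s (a t).1 < s (a t).2 then (a t).2 j else (a t).1 j) →
      0 ≤ Filter.liminf
          (fun T : ℕ => (∑ t ∈ Finset.range T, (s (a t).1 - s (a t).2)) / T)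
          Filter.atTop) ↔
    (∃ r : A j → ℝ, ∀ b : ∀ k, A k, s b = r (b j)) :=
  iibUnbeatable_iff_factorsThrough.trans <| (factorsThrough_iff s).trans <| by
    simp only [funext_iff, comp_apply]

/-- Theorem 2 of the paper: the Imitate-If-Better strategy of player
`(1, j)` is unbeatable against player `(2, j)` iff the stage game is a strongly
payoff-monotonic game for player `(1, j)`.  Rounds are indexed so that `a t` is the
full action profile of round `t + 1`. -/
theorem IIB_unbeatable_iff_strongly_payoff_monotonic
    {N : ℕ} (hN : 2 ≤ N) (A : Fin N → Type*)
    [∀ k, Fintype (A k)] [∀ k, Nonempty (A k)]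
    (j : Fin N) (s : (∀ k, A k) → ℝ) :
    (∀ a : ℕ → ((∀ k, A k) × (∀ k, A k)),
      (∀ t, (a (t + 1)).1 j =
          if s (a t).1 < s (a t).2 then (a t).2 j else (a t).1 j) →
      0 ≤ Filter.liminf
          (fun T : ℕ => (∑ t ∈ Finset.range T, (s (a t).1 - s (a t).2)) / T)
          Filter.atTop) ↔
    (∃ r : A j → ℝ, ∀ b : ∀ k, A k, s b = r (b j)) :=
  IIB_unbeatable_iff_strongly_payoff_monotonic_general A j s
end

section
/- Let A be a finite nonempty set and r : A → ℝ. Let x, y : ℕ → A (with indices t ≥ 1) be sequences such that for every t ≥ 1, r(x_t) = max{ r(x_1), max{ r(y_{t'}) : 1 ≤ t' ≤ t−1 } } (where the inner max over an empty range is omitted, so r(x_1) is the value at t = 1). Then liminf_{T→∞} (1/T) ∑_{t=1}^T ( r(x_t) − r(y_t) ) ≥ 0; in particular, (1/T) ∑_{t=1}^T r(x_t) ≥ (1/T) ( ∑_{t=1}^T r(y_t) − r(y_T) + r(x_1) ) for every T ≥ 1. -/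
/-- the core sufficiency estimate for Imitate-If-Better in strongly
payoff-monotonic games.  If for every round `t ≥ 1` the value `r (x t)` equals the
maximum of `r (x 1)` and of the previously observed values `r (y t')`, `1 ≤ t' ≤ t - 1`,
then the time-averaged difference of `r (x t)` and `r (y t)` has nonnegative liminf,
and for every `T ≥ 1` the explicit per-`T` inequality holds. -/
theorem running_max_imitation_unbeatable
    {A : Type*} [Fintype A] [Nonempty A] (r : A → ℝ) (x y : ℕ → A)
    (h : ∀ t : ℕ, 1 ≤ t →
      r (x t) = (insert (r (x 1))
          ((Finset.Icc 1 (t - 1)).image fun t' => r (y t'))).max'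
        (Finset.insert_nonempty _ _)) :
    (0 ≤ Filter.liminf
        (fun T : ℕ => (∑ t ∈ Finset.Icc 1 T, (r (x t) - r (y t))) / T)
        Filter.atTop) ∧
    (∀ T : ℕ, 1 ≤ T →
      ((∑ t ∈ Finset.Icc 1 T, r (y t)) - r (y T) + r (x 1)) / T ≤
        (∑ t ∈ Finset.Icc 1 T, r (x t)) / T) := by
  -- x 1 value
  have hx1 : r (x 1) = (insert (r (x 1))
      ((Finset.Icc 1 0).image fun t' => r (y t'))).max' (Finset.insert_nonempty _ _) := h 1 le_rfl
  -- key: r (x (T+1)) ≥ r (y T) for T ≥ 1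
  have hxy : ∀ T : ℕ, 1 ≤ T → r (y T) ≤ r (x (T + 1)) := by
    intro T hT
    rw [h (T + 1) (by omega)]
    apply Finset.le_max'
    apply Finset.mem_insert_of_mem
    exact Finset.mem_image.2 ⟨T, by simp [Finset.mem_Icc, hT], rfl⟩
  -- key inequality, by induction
  have key : ∀ T : ℕ, 1 ≤ T →
      (∑ t ∈ Finset.Icc 1 T, r (y t)) - r (y T) + r (x 1) ≤
        ∑ t ∈ Finset.Icc 1 T, r (x t) := by
    intro T hT
    induction T with
    | zero => omega
    | succ n ih =>
      rcases Nat.eq_or_lt_of_le hT with h1 | h1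
      · simp [← h1]
      · have hn : 1 ≤ n := by omega
        have ih' := ih hn
        rw [Finset.sum_Icc_succ_top (by omega : 1 ≤ n + 1),
          Finset.sum_Icc_succ_top (by omega : 1 ≤ n + 1)]
        have := hxy n hn
        linarith
  constructor
  · -- liminf part
    obtain ⟨M, hM⟩ : ∃ M : ℝ, ∀ a, r a ≤ M := ⟨(Finset.univ.image r).max' (by simp), fun a =>
      Finset.le_max' _ _ (Finset.mem_image.2 ⟨a, Finset.mem_univ a, rfl⟩)⟩
    obtain ⟨m, hm⟩ : ∃ m : ℝ, ∀ a, m ≤ r a := ⟨(Finset.univ.image r).min' (by simp), fun a =>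
      Finset.min'_le _ _ (Finset.mem_image.2 ⟨a, Finset.mem_univ a, rfl⟩)⟩
    set f : ℕ → ℝ := fun T => (∑ t ∈ Finset.Icc 1 T, (r (x t) - r (y t))) / T with hf
    set g : ℕ → ℝ := fun T => (r (x 1) - M) / T with hg
    have hgto : Filter.Tendsto g Filter.atTop (nhds 0) :=
      Filter.Tendsto.const_div_atTop (tendsto_natCast_atTop_atTop (R := ℝ)) (r (x 1) - M)
    have hle : ∀ᶠ T : ℕ in Filter.atTop, g T ≤ f T := by
      filter_upwards [Filter.eventually_ge_atTop 1] with T hT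
      have hsum : (∑ t ∈ Finset.Icc 1 T, (r (x t) - r (y t))) =
          (∑ t ∈ Finset.Icc 1 T, r (x t)) - ∑ t ∈ Finset.Icc 1 T, r (y t) := by
        rw [Finset.sum_sub_distrib]
      have hk := key T hT
      have h1 : r (x 1) - M ≤ ∑ t ∈ Finset.Icc 1 T, (r (x t) - r (y t)) := by
        rw [hsum]; have := hM (y T); linarith
      exact div_le_div_of_nonneg_right h1 (Nat.cast_nonneg T)
    have hfb : Filter.IsBoundedUnder (· ≤ ·) Filter.atTop f := by
      refine ⟨max (M - m) 0, Filter.eventually_map.2 ?_⟩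
      filter_upwards [] with T
      rcases Nat.eq_zero_or_pos T with h0 | hTp
      · simp [hf, h0, le_max_right]
      · refine le_trans ?_ (le_max_left _ _)
        have hT0 : (0:ℝ) < (T : ℝ) := by exact_mod_cast hTp
        rw [hf, div_le_iff₀ hT0]
        calc (∑ t ∈ Finset.Icc 1 T, (r (x t) - r (y t)))
            ≤ ∑ t ∈ Finset.Icc 1 T, (M - m) := by
              apply Finset.sum_le_sum; intro i _
              have := hM (x i); have := hm (y i); linarith
          _ = T * (M - m) := by
              rw [Finset.sum_const, Nat.card_Icc]; push_cast; ring
          _ = (M - m) * T := by ring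
    have := Filter.liminf_le_liminf hle hgto.isBoundedUnder_ge hfb.isCoboundedUnder_ge
    rwa [hgto.liminf_eq] at this
  · -- per-T inequality
    intro T hT
    exact div_le_div_of_nonneg_right (key T hT) (Nat.cast_nonneg T)
end

section
/- Let N ≥ 2 and let A_1,…,A_N be finite nonempty sets with 𝒜 := ∏_{k=1}^N A_k, and let s_j : 𝒜 → ℝ. The Tit-for-Tat strategy of player (1,j) is unbeatable against player (2,j) — i.e. for every play consistent with TFT, liminf_{T→∞} (1/T) ∑_{t=1}^T (s_j(a^{(t)}_1) − s_j(a^{(t)}_2)) ≥ 0 — if and only if the stage game is a strongly payoff-monotonic game for player (1,j). -/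
/-- Theorem 3 of the paper: the Tit-for-Tat strategy of player `(1, j)`
is unbeatable against player `(2, j)` iff the stage game is a strongly
payoff-monotonic game for player `(1, j)`.  Rounds are indexed so that `a t` is the
full action profile of round `t + 1`. -/
theorem TFT_unbeatable_iff_strongly_payoff_monotonic
    {N : ℕ} (hN : 2 ≤ N) (A : Fin N → Type*)
    [∀ k, Fintype (A k)] [∀ k, Nonempty (A k)]
    (j : Fin N) (s : (∀ k, A k) → ℝ) :
    (∀ a : ℕ → ((∀ k, A k) × (∀ k, A k)),
      (∀ t, (a (t + 1)).1 j = (a t).2 j) →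
      0 ≤ Filter.liminf
          (fun T : ℕ => (∑ t ∈ Finset.range T, (s (a t).1 - s (a t).2)) / T)
          Filter.atTop) ↔
    (∃ r : A j → ℝ, ∀ b : ∀ k, A k, s b = r (b j)) := by
  constructor
  · intro h
    have H : ∀ p q : ∀ k, A k, p j = q j → 0 ≤ s p - s q := by
      intro p q hpq
      have hlim := h (fun _ => (p, q)) (fun t => hpq)
      have heq : (fun T : ℕ => (∑ _t ∈ Finset.range T, (s p - s q)) / T)
          =ᶠ[Filter.atTop] fun _ => s p - s q := by
        filter_upwards [Filter.eventually_gt_atTop 0] with T hT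
        have hT' : (T : ℝ) ≠ 0 := Nat.cast_ne_zero.mpr hT.ne'
        rw [Finset.sum_const, Finset.card_range, nsmul_eq_mul,
          mul_div_cancel_left₀ _ hT']
      rwa [Filter.liminf_congr heq, Filter.liminf_const] at hlim
    have key : ∀ b b' : ∀ k, A k, b j = b' j → s b = s b' := by
      intro b b' hbb
      have h1 := H b b' hbb
      have h2 := H b' b hbb.symm
      linarith
    refine ⟨fun c => s (Function.update (Classical.arbitrary _) j c), fun b => ?_⟩
    exact key b _ (by simp)
  · rintro ⟨r, hr⟩ a ha
    obtain ⟨C, hC⟩ := Finite.exists_le fun c : A j => |r c|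
    have tel : ∀ T : ℕ, ∑ t ∈ Finset.range (T + 1), (s (a t).1 - s (a t).2)
        = r ((a 0).1 j) - r ((a T).2 j) := by
      intro T
      induction T with
      | zero => simp [hr]
      | succ T ih =>
        rw [Finset.sum_range_succ, ih, hr ((a (T + 1)).1), hr ((a (T + 1)).2), ha T]
        ring
    have htend : Filter.Tendsto
        (fun T : ℕ => (∑ t ∈ Finset.range T, (s (a t).1 - s (a t).2)) / T)
        Filter.atTop (nhds 0) := by
      refine squeeze_zero_norm' ?_ (tendsto_const_div_atTop_nhds_zero_nat (C + C))
      · show ∀ᶠ T : ℕ in Filter.atTop, _ ≤ (C + C) / (T : ℝ)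
        filter_upwards [Filter.eventually_ge_atTop 1] with T hT
        obtain ⟨S, rfl⟩ := Nat.exists_eq_add_of_le hT
        rw [add_comm 1 S, tel S]
        rw [norm_div, Real.norm_natCast]
        apply div_le_div_of_nonneg_right ?_ (by positivity)
        calc ‖r ((a 0).1 j) - r ((a S).2 j)‖
            ≤ |r ((a 0).1 j)| + |r ((a S).2 j)| := norm_sub_le _ _
          _ ≤ C + C := add_le_add (hC _) (hC _)
    rw [htend.liminf_eq]
end

section
/- Let N ≥ 2 and let A_1,…,A_N be finite nonempty sets with 𝒜 := ∏_{k=1}^N A_k, and suppose the stage game is a nontrivial strongly payoff-monotonic game for player (1,j), with s_j(a_j, a_{−j}) = r(a_j) for a non-constant r : A_j → ℝ. Then the Tit-for-Tat strategy T of player (1,j), defined by T(a_j | a') = δ_{a_j, a'_{(2,j)}}, is a fair zero-determinant strategy of player (1,j): with coefficients c(a_j) := −r(a_j), one has ∑_{a_j ∈ A_j} c(a_j) T(a_j|a') − c(a'_{(1,j)}) = s_j(a'_1) − s_j(a'_2) for every a' ∈ 𝒜 × 𝒜, and the right-hand side is not identically zero. -/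
/-- Theorem 4 of the paper: in a nontrivial strongly payoff-monotonic
game for player `(1, j)`, the Tit-for-Tat strategy `T(a_j | a') = δ_{a_j, a'_{(2,j)}}`
is a fair zero-determinant strategy with coefficients `c(a_j) = -r(a_j)`. -/
theorem TFT_is_fair_ZD_in_strongly_payoff_monotonic
    {N : ℕ} (hN : 2 ≤ N) (A : Fin N → Type*)
    [∀ k, Fintype (A k)] [∀ k, Nonempty (A k)] [∀ k, DecidableEq (A k)]
    (j : Fin N) (s : (∀ k, A k) → ℝ)
    (r : A j → ℝ) (hmon : ∀ b : ∀ k, A k, s b = r (b j))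
    (hnc : ¬ (∀ x x' : A j, r x = r x'))
    (T : ((∀ k, A k) × (∀ k, A k)) → A j → ℝ)
    (hT : ∀ a' x, T a' x = if x = a'.2 j then 1 else 0) :
    (∀ a' : ((∀ k, A k) × (∀ k, A k)),
      (∑ x, (-(r x)) * T a' x) - (-(r (a'.1 j))) = s a'.1 - s a'.2) ∧
    ¬ (∀ a' : ((∀ k, A k) × (∀ k, A k)), s a'.1 - s a'.2 = 0) := by
  constructor
  · intro a'
    have hsum : (∑ x, (-(r x)) * T a' x) = -(r (a'.2 j)) := by
      rw [Finset.sum_eq_single (a'.2 j)]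
      · rw [hT]; simp
      · intro b _ hb; rw [hT]; simp [hb]
      · simp
    rw [hsum, hmon a'.1, hmon a'.2]
    ring
  · intro h
    apply hnc
    intro x x'
    push_neg at hnc
    obtain ⟨b⟩ := (inferInstance : Nonempty (∀ k, A k))
    have := h (Function.update b j x, Function.update b j x')
    simp only [hmon, Function.update_self] at this
    linarith
end

section
/- Let N ≥ 2 and let A_1,…,A_N be finite nonempty sets with 𝒜 := ∏_{k=1}^N A_k, and suppose the stage game is a nontrivial strongly payoff-monotonic game for player (1,j), with s_j(a_j, a_{−j}) = r(a_j) for a non-constant r : A_j → ℝ. Then the Imitate-If-Better strategy T of player (1,j) is a zero-determinant strategy with coefficients c(a_j) := r(a_j) and controlled function D(a') := ( s_j(a'_2) − s_j(a'_1) ) · 1[ s_j(a'_1) < s_j(a'_2) ]: for every a' ∈ 𝒜 × 𝒜, ∑_{a_j ∈ A_j} r(a_j) T(a_j|a') − r(a'_{(1,j)}) = ( s_j(a'_2) − s_j(a'_1) ) · 1[ s_j(a'_1) < s_j(a'_2) ], and neither side is identically zero. -/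
/-- Theorem 5 of the paper: in a nontrivial strongly payoff-monotonic
game for player `(1, j)`, the Imitate-If-Better strategy is a zero-determinant
strategy with coefficients `c(a_j) = r(a_j)` enforcing the controlled function
`D(a') = (s_j(a'_2) - s_j(a'_1)) · 1[s_j(a'_1) < s_j(a'_2)]`. -/
theorem IIB_is_ZD_in_strongly_payoff_monotonic
    {N : ℕ} (hN : 2 ≤ N) (A : Fin N → Type*)
    [∀ k, Fintype (A k)] [∀ k, Nonempty (A k)] [∀ k, DecidableEq (A k)]
    (j : Fin N) (s : (∀ k, A k) → ℝ)
    (r : A j → ℝ) (hmon : ∀ b : ∀ k, A k, s b = r (b j))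
    (hnc : ¬ (∀ x x' : A j, r x = r x'))
    (T : ((∀ k, A k) × (∀ k, A k)) → A j → ℝ)
    (hT : ∀ a' x, T a' x =
      (if x = a'.2 j then (1 : ℝ) else 0) * (if s a'.1 < s a'.2 then 1 else 0) +
      (if x = a'.1 j then (1 : ℝ) else 0) * (if s a'.1 ≥ s a'.2 then 1 else 0)) :
    (∀ a' : ((∀ k, A k) × (∀ k, A k)),
      (∑ x, r x * T a' x) - r (a'.1 j) =
        (s a'.2 - s a'.1) * (if s a'.1 < s a'.2 then 1 else 0)) ∧
    ¬ (∀ a' : ((∀ k, A k) × (∀ k, A k)),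
      (s a'.2 - s a'.1) * (if s a'.1 < s a'.2 then (1 : ℝ) else 0) = 0) := by
  constructor
  · intro a'
    have hsum : (∑ x, r x * T a' x) =
        r (a'.2 j) * (if s a'.1 < s a'.2 then 1 else 0) +
        r (a'.1 j) * (if s a'.1 ≥ s a'.2 then 1 else 0) := by
      simp only [hT, mul_add]
      rw [Finset.sum_add_distrib]
      congr 1
      · rw [Finset.sum_eq_single (a'.2 j)]
        · simp
        · intro x _ hx; simp [hx]
        · simp
      · rw [Finset.sum_eq_single (a'.1 j)]
        · simp
        · intro x _ hx; simp [hx]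
        · simp
    rw [hsum, hmon a'.1, hmon a'.2]
    by_cases h : r (a'.1 j) < r (a'.2 j) <;> simp [h, not_lt.mp, le_of_lt] <;> ring_nf
  · intro hall
    push_neg at hnc
    obtain ⟨x, x', hxx⟩ := hnc
    rcases lt_or_gt_of_ne hxx with h | h
    · have b := Classical.arbitrary (∀ k, A k)
      have := hall (Function.update b j x, Function.update b j x')
      simp only [hmon, Function.update_self] at this
      rw [if_pos h] at this
      have : r x' - r x = 0 := by linarith [this]
      linarith
    · have b := Classical.arbitrary (∀ k, A k)
      have := hall (Function.update b j x', Function.update b j x)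
      simp only [hmon, Function.update_self] at this
      rw [if_pos h] at this
      have : r x - r x' = 0 := by linarith [this]
      linarith
end

section
/- Let N ≥ 2 and let A_1,…,A_N be finite nonempty sets with 𝒜 := ∏_{k=1}^N A_k. Let T be a memory-one strategy of player (1,j), c : A_j → ℝ, and D : 𝒜 × 𝒜 → ℝ, and suppose ∑_{a_j ∈ A_j} c(a_j) T(a_j|a') − c(a'_{(1,j)}) = D(a') for every a' ∈ 𝒜 × 𝒜. Let (P_t)_{t≥1} be any sequence of probability distributions on 𝒜 × 𝒜 such that for every t ≥ 1 and every a_j ∈ A_j, the P_{t+1}-probability that the (1,j)-component equals a_j is ∑_{a' ∈ 𝒜 × 𝒜} P_t(a') T(a_j|a') (i.e. player (1,j) plays according to T, while all other components are arbitrary and possibly correlated). Then lim_{T→∞} (1/T) ∑_{t=1}^T E_{P_t}[D] = 0. -/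
/-- the payoff-control property of zero-determinant strategies.  If a
memory-one strategy `T` of player `(1, j)` satisfies the ZD linear relation with
coefficients `c` and controlled function `D`, then along any sequence of round
distributions `P t` (with `P t` the distribution of the full profile of round `t + 1`)
in which player `(1, j)` plays according to `T`, the time-averaged expected value of
`D` converges to `0`. -/
theorem ZD_enforces_zero_average
    {N : ℕ} (hN : 2 ≤ N) (A : Fin N → Type*)
    [∀ k, Fintype (A k)] [∀ k, Nonempty (A k)] [∀ k, DecidableEq (A k)]
    (j : Fin N)
    (T : ((∀ k, A k) × (∀ k, A k)) → A j → ℝ)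
    (hT0 : ∀ a' x, 0 ≤ T a' x) (hT1 : ∀ a', ∑ x, T a' x = 1)
    (c : A j → ℝ) (D : ((∀ k, A k) × (∀ k, A k)) → ℝ)
    (hZD : ∀ a' : ((∀ k, A k) × (∀ k, A k)),
      (∑ x, c x * T a' x) - c (a'.1 j) = D a')
    (P : ℕ → ((∀ k, A k) × (∀ k, A k)) → ℝ)
    (hP0 : ∀ t a', 0 ≤ P t a') (hP1 : ∀ t, ∑ a', P t a' = 1)
    (hmarg : ∀ (t : ℕ) (x : A j),
      ∑ a' ∈ Finset.univ.filter
          (fun a' : ((∀ k, A k) × (∀ k, A k)) => a'.1 j = x), P (t + 1) a' =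
        ∑ a', P t a' * T a' x) :
    Filter.Tendsto
      (fun n : ℕ => (∑ t ∈ Finset.range n, ∑ a', P t a' * D a') / n)
      Filter.atTop (nhds 0) := by
  classical
  set f : ℕ → ℝ := fun t => ∑ a', P t a' * c (a'.1 j) with hf
  -- step identity
  have hstep : ∀ t, ∑ a', P t a' * D a' = f (t + 1) - f t := by
    intro t
    have h1 : ∑ a', P t a' * D a'
        = (∑ a', P t a' * ∑ x, c x * T a' x) - f t := by
      rw [← Finset.sum_sub_distrib]
      refine Finset.sum_congr rfl fun a' _ => ?_
      rw [← hZD a']; ring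
    have h2 : (∑ a', P t a' * ∑ x, c x * T a' x) = f (t + 1) := by
      have : (∑ a', P t a' * ∑ x, c x * T a' x)
          = ∑ x, c x * ∑ a', P t a' * T a' x := by
        simp_rw [Finset.mul_sum]
        rw [Finset.sum_comm]
        refine Finset.sum_congr rfl fun x _ => ?_
        refine Finset.sum_congr rfl fun a' _ => by ring
      rw [this]
      have h3 : ∀ x : A j, c x * ∑ a', P t a' * T a' x
          = ∑ a' ∈ Finset.univ.filter
              (fun a' : ((∀ k, A k) × (∀ k, A k)) => a'.1 j = x),
              P (t + 1) a' * c (a'.1 j) := by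
        intro x
        rw [← hmarg t x, Finset.mul_sum]
        refine Finset.sum_congr rfl fun a' ha' => ?_
        have := (Finset.mem_filter.1 ha').2
        rw [this]; ring
      simp_rw [h3]
      exact Finset.sum_fiberwise_of_maps_to (fun a' _ => Finset.mem_univ (a'.1 j)) _
    rw [h1, h2]
  have htel : ∀ n, ∑ t ∈ Finset.range n, ∑ a', P t a' * D a' = f n - f 0 := by
    intro n
    simp_rw [hstep]
    exact Finset.sum_range_sub f n
  -- bound on f
  obtain ⟨M, hM⟩ : ∃ M, ∀ x : A j, |c x| ≤ M :=
    ⟨Finset.univ.sup' Finset.univ_nonempty fun x => |c x|,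
      fun x => Finset.le_sup' (fun x => |c x|) (Finset.mem_univ x)⟩
  have hM0 : 0 ≤ M := le_trans (abs_nonneg _) (hM (Classical.arbitrary _))
  have hfb : ∀ t, |f t| ≤ M := by
    intro t
    calc |f t| ≤ ∑ a', |P t a' * c (a'.1 j)| := Finset.abs_sum_le_sum_abs _ _
      _ ≤ ∑ a', P t a' * M := by
          refine Finset.sum_le_sum fun a' _ => ?_
          rw [abs_mul, abs_of_nonneg (hP0 t a')]
          exact mul_le_mul_of_nonneg_left (hM _) (hP0 t a')
      _ = M := by rw [← Finset.sum_mul, hP1 t, one_mul]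
  -- squeeze
  have hb : ∀ n : ℕ, ‖(∑ t ∈ Finset.range n, ∑ a', P t a' * D a') / n‖
      ≤ (2 * M) / n := by
    intro n
    rcases Nat.eq_zero_or_pos n with h | h
    · simp [h]
    · rw [htel, norm_div, Real.norm_natCast]
      gcongr
      calc ‖f n - f 0‖ ≤ |f n| + |f 0| := norm_sub_le _ _
        _ ≤ M + M := add_le_add (hfb n) (hfb 0)
        _ = 2 * M := by ring
  exact squeeze_zero_norm hb (tendsto_const_div_atTop_nhds_zero_nat (2 * M))
end

section
/- Let N ≥ 2 and let A_1,…,A_N be finite nonempty sets with 𝒜 := ∏_{k=1}^N A_k, and let s_j : 𝒜 → ℝ. Suppose T is a fair zero-determinant strategy of player (1,j), with coefficients c : A_j → ℝ satisfying ∑_{a_j} c(a_j) T(a_j|a') − c(a'_{(1,j)}) = s_j(a'_1) − s_j(a'_2) for every a' ∈ 𝒜 × 𝒜. Then for any sequence (P_t)_{t≥1} of probability distributions on 𝒜 × 𝒜 such that for every t and every a_j ∈ A_j the P_{t+1}-probability that the (1,j)-component equals a_j is ∑_{a'} P_t(a') T(a_j|a'), one has lim_{T→∞} (1/T) ∑_{t=1}^T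 ( E_{P_t}[s_j(a_1)] − E_{P_t}[s_j(a_2)] ) = 0; in particular, whenever the time-averaged expected payoffs 𝒮_{(1,j)} and 𝒮_{(2,j)} exist as limits, 𝒮_{(1,j)} = 𝒮_{(2,j)}, so a fair ZD strategy is unbeatable. -/
/-- a fair zero-determinant strategy of player `(1, j)` unilaterally
enforces that the time-averaged expected payoffs of players `(1, j)` and `(2, j)`
coincide: the time average of `E_{P_t}[s_j(a_1)] - E_{P_t}[s_j(a_2)]` converges to
`0`; in particular, whenever the time-averaged payoffs exist as limits, they are
equal, so a fair ZD strategy is unbeatable.  `P t` is the distribution of the full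
profile of round `t + 1`. -/
theorem fairZD_is_unbeatable
    {N : ℕ} (hN : 2 ≤ N) (A : Fin N → Type*)
    [∀ k, Fintype (A k)] [∀ k, Nonempty (A k)] [∀ k, DecidableEq (A k)]
    (j : Fin N) (s : (∀ k, A k) → ℝ)
    (T : ((∀ k, A k) × (∀ k, A k)) → A j → ℝ)
    (hT0 : ∀ a' x, 0 ≤ T a' x) (hT1 : ∀ a', ∑ x, T a' x = 1)
    (c : A j → ℝ)
    (hZD : ∀ a' : ((∀ k, A k) × (∀ k, A k)),
      (∑ x, c x * T a' x) - c (a'.1 j) = s a'.1 - s a'.2)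
    (P : ℕ → ((∀ k, A k) × (∀ k, A k)) → ℝ)
    (hP0 : ∀ t a', 0 ≤ P t a') (hP1 : ∀ t, ∑ a', P t a' = 1)
    (hmarg : ∀ (t : ℕ) (x : A j),
      ∑ a' ∈ Finset.univ.filter
          (fun a' : ((∀ k, A k) × (∀ k, A k)) => a'.1 j = x), P (t + 1) a' =
        ∑ a', P t a' * T a' x) :
    Filter.Tendsto
      (fun n : ℕ =>
        (∑ t ∈ Finset.range n, ((∑ a', P t a' * s a'.1) - ∑ a', P t a' * s a'.2)) / n)
      Filter.atTop (nhds 0) ∧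
    ∀ S1 S2 : ℝ,
      Filter.Tendsto
        (fun n : ℕ => (∑ t ∈ Finset.range n, ∑ a', P t a' * s a'.1) / n)
        Filter.atTop (nhds S1) →
      Filter.Tendsto
        (fun n : ℕ => (∑ t ∈ Finset.range n, ∑ a', P t a' * s a'.2) / n)
        Filter.atTop (nhds S2) →
      S1 = S2 := by

  classical
  set f : ℕ → ℝ := fun t => ∑ a', P t a' * c (a'.1 j) with hf
  set D : ℕ → ℝ := fun t => (∑ a', P t a' * s a'.1) - ∑ a', P t a' * s a'.2 with hD
  have key : ∀ t, D t = f (t + 1) - f t := by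
    intro t
    have h1 : D t = ∑ a', P t a' * ((∑ x, c x * T a' x) - c (a'.1 j)) := by
      simp only [hD]
      rw [← Finset.sum_sub_distrib]
      congr 1; ext a'
      rw [hZD a']; ring
    have h2 : f (t + 1) = ∑ x, c x * ∑ a' ∈ Finset.univ.filter
        (fun a' : ((∀ k, A k) × (∀ k, A k)) => a'.1 j = x), P (t + 1) a' := by
      simp only [hf]
      rw [← Finset.sum_fiberwise (g := fun a' : ((∀ k, A k) × (∀ k, A k)) => a'.1 j)
        (f := fun a' => P (t+1) a' * c (a'.1 j))]
      congr 1; ext x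
      rw [Finset.mul_sum]
      apply Finset.sum_congr rfl
      intro a' ha'
      simp only [Finset.mem_filter] at ha'
      rw [ha'.2]; ring
    rw [h1, h2]
    have h3 : ∑ x, c x * ∑ a', P t a' * T a' x
        = ∑ a', P t a' * ∑ x, c x * T a' x := by
      simp_rw [Finset.mul_sum]
      rw [Finset.sum_comm]
      congr 1; ext a'; congr 1; ext x; ring
    simp only [hmarg t]
    rw [h3, ← Finset.sum_sub_distrib]
    congr 1; ext a'; ring
  -- boundedness of f
  obtain ⟨x₀⟩ : Nonempty (A j) := inferInstance
  set M : ℝ := ∑ x, |c x| with hM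
  have hcM : ∀ y : A j, |c y| ≤ M := fun y =>
    Finset.single_le_sum (fun x _ => abs_nonneg (c x)) (Finset.mem_univ y)
  have hM0 : 0 ≤ M := (abs_nonneg _).trans (hcM x₀)
  have hfB : ∀ t, |f t| ≤ M := by
    intro t
    calc |f t| ≤ ∑ a', |P t a' * c (a'.1 j)| := Finset.abs_sum_le_sum_abs _ _
      _ ≤ ∑ a' : ((∀ k, A k) × (∀ k, A k)), P t a' * M := by
          apply Finset.sum_le_sum
          intro a' _
          rw [abs_mul, abs_of_nonneg (hP0 t a')]
          exact mul_le_mul_of_nonneg_left (hcM _) (hP0 t a')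
      _ = M := by rw [← Finset.sum_mul, hP1 t, one_mul]
  have htel : ∀ n, ∑ t ∈ Finset.range n, D t = f n - f 0 := by
    intro n
    simp only [key]
    exact Finset.sum_range_sub f n
  have hmain : Filter.Tendsto
      (fun n : ℕ => (∑ t ∈ Finset.range n, D t) / n)
      Filter.atTop (nhds 0) := by
    refine squeeze_zero_norm (fun n => ?_)
      (tendsto_const_div_atTop_nhds_zero_nat (2 * M))
    rcases Nat.eq_zero_or_pos n with h | h
    · simp [h]
    · rw [htel, Real.norm_eq_abs, abs_div, abs_of_nonneg (by positivity : (0:ℝ) ≤ (n:ℝ))]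
      have hn : (0:ℝ) < n := by exact_mod_cast h
      gcongr

      calc |f n - f 0| ≤ |f n| + |f 0| := abs_sub _ _
        _ ≤ M + M := add_le_add (hfB n) (hfB 0)
        _ = 2 * M := by ring
  refine ⟨hmain, fun S1 S2 h1 h2 => ?_⟩
  have hsub : Filter.Tendsto
      (fun n : ℕ => (∑ t ∈ Finset.range n, D t) / n)
      Filter.atTop (nhds (S1 - S2)) := by
    have : (fun n : ℕ => (∑ t ∈ Finset.range n, D t) / n)
        = fun n : ℕ => (∑ t ∈ Finset.range n, ∑ a', P t a' * s a'.1) / n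
          - (∑ t ∈ Finset.range n, ∑ a', P t a' * s a'.2) / n := by
      ext n
      simp only [hD, Finset.sum_sub_distrib]
      ring
    rw [this]
    exact h1.sub h2
  have := tendsto_nhds_unique hsub hmain
  linarith
end

section
/- Let N ≥ 2, let A_1,…,A_N be finite nonempty sets with 𝒜 := ∏_{k=1}^N A_k, let 0 < ε ≤ 1, and suppose the stage game is weakly payoff-monotonic for player (1,j) with top action a_j^H. Let (Ω, F, P) be a probability space with a filtration (F_t)_{t≥1}, and let X^{(t)} : Ω → 𝒜 × 𝒜 be F_t-measurable random full profiles such that player (1,j) follows the ε-Imitate-If-Better strategy: for every t ≥ 1, every a_j ∈ A_j, and every event C ∈ F_t, P( { X^{(t+1)}_{(1,j)} = a_j } ∩ C ) = ∫_C T_ε( a_j | X^{(t)} ) dP. Then P-almost surely the set { t : s_j(X^{(t)}_1) < s_j(X^{(t)}_2) } is finite, and consequently liminf_{T→∞} (1/T) ∑_{t=1}^T ( s_j(X^{(t)}_1) − s_j(X^{(t)}_2) ) ≥ 0 almost surely; in particular ε-IIB is unbeatable against player (2,j). -/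
/-!
Let `H t` be the event that player `(1, j)` plays its top action `aH` in round `t`. While
`(1, j)` plays `aH` its payoff is the maximal value `rH`, so it is never beaten and imitation
keeps it at `aH`: `H` is absorbing. Each round in which `(1, j)` is beaten, it switches to `aH`
with conditional probability at least `ε / |A_j|`; by Lévy's conditional Borel–Cantelli lemma,
being beaten infinitely often therefore forces `H` infinitely often, hence `H` forever after
some round, hence only finitely many beaten rounds. Since the payoff difference is then
eventually nonnegative and bounded, its Cesàro means have nonnegative `liminf`.
-/

open MeasureTheory Filter Finset

section Measurability

variable {Ω β γ : Type*} {m : MeasurableSpace Ω}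

theorem measurable_comp_of_measurableSet_fiber [Countable β] [MeasurableSpace γ] {X : Ω → β}
    (hX : ∀ b, MeasurableSet[m] {ω | X ω = b}) (g : β → γ) :
    Measurable[m] fun ω => g (X ω) :=
  letI : MeasurableSpace β := ⊤
  measurable_from_top.comp (measurable_to_countable' hX)

theorem measurableSet_setOf_comp_of_measurableSet_fiber [Countable β] {X : Ω → β}
    (hX : ∀ b, MeasurableSet[m] {ω | X ω = b}) (p : β → Prop) :
    MeasurableSet[m] {ω | p (X ω)} :=
  measurableSet_setOfPred.2 (measurable_comp_of_measurableSet_fiber hX p)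

theorem integrable_comp_of_measurableSet_fiber [Finite β] {μ : Measure[m] Ω}
    [IsFiniteMeasure μ] {X : Ω → β} (hX : ∀ b, MeasurableSet[m] {ω | X ω = b}) (g : β → ℝ) :
    Integrable (fun ω => g (X ω)) μ := by
  obtain ⟨C, hC⟩ := (Set.finite_range fun b => ‖g b‖).bddAbove
  exact .of_bound (measurable_comp_of_measurableSet_fiber hX g).aestronglyMeasurable C
    (ae_of_all _ fun ω => hC ⟨X ω, rfl⟩)

end Measurability

section Probability

variable {Ω : Type*} {m m0 : MeasurableSpace Ω} {μ : Measure Ω}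

theorem condExp_indicator_ae_eq_of_forall_measureReal_inter_eq [IsFiniteMeasure μ]
    (hm : m ≤ m0) {s : Set Ω} (hs : MeasurableSet s) {g : Ω → ℝ}
    (hgm : StronglyMeasurable[m] g) (hgi : Integrable g μ)
    (h : ∀ C, MeasurableSet[m] C → μ.real (s ∩ C) = ∫ ω in C, g ω ∂μ) :
    μ[s.indicator 1 | m] =ᵐ[μ] g := by
  refine (ae_eq_condExp_of_forall_setIntegral_eq hm ((integrable_const 1).indicator hs)
    (fun _ _ _ => hgi.integrableOn) (fun C hC _ => ?_) hgm.aestronglyMeasurable).symm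
  rw [← h C hC, setIntegral_indicator hs, Set.inter_comm]
  simp

theorem ae_mem_limsup_of_indicator_le_condExp [IsFiniteMeasure μ] {ℱ : Filtration ℕ m0}
    {s t : ℕ → Set Ω} (hs : ∀ n, MeasurableSet[ℱ n] (s n)) {δ : ℝ} (hδ : 0 < δ)
    (hle : ∀ n, ∀ᵐ ω ∂μ, (t n).indicator (fun _ => δ) ω ≤ μ[(s (n + 1)).indicator 1 | ℱ n] ω) :
    ∀ᵐ ω ∂μ, ω ∈ limsup t atTop → ω ∈ limsup s atTop := by
  filter_upwards [ae_mem_limsup_atTop_iff μ hs, ae_all_iff.2 hle] with ω hiff hω ht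
  rw [Set.limsup_eq_tendsto_sum_indicator_atTop hδ] at ht
  exact hiff.2 (tendsto_atTop_mono (fun n => sum_le_sum fun k _ => hω k) ht)

theorem measure_sdiff_eq_zero_of_measureReal_inter_eq [IsFiniteMeasure μ] {s t : Set Ω}
    (ht : MeasurableSet t) (h : μ.real (s ∩ t) = μ.real s) : μ (s \ t) = 0 := by
  have := measureReal_inter_add_sdiff (μ := μ) (s := s) ht
  rw [← measureReal_eq_zero_iff]
  linarith

theorem ae_forall_le_mem_of_measure_sdiff_succ {s : ℕ → Set Ω}
    (h : ∀ n, μ (s n \ s (n + 1)) = 0) :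
    ∀ᵐ ω ∂μ, ∀ n, ω ∈ s n → ∀ k, n ≤ k → ω ∈ s k := by
  filter_upwards [ae_all_iff.2 fun n => measure_eq_zero_iff_ae_notMem.1 (h n)]
    with ω hω n hn k hk
  induction k, hk using Nat.le_induction with
  | base => exact hn
  | succ k _ ih => exact not_not.1 fun hout => hω k ⟨ih, hout⟩

end Probability

theorem finite_setOf_of_frequently_imp_absorbing {p q : ℕ → Prop}
    (hrec : (∃ᶠ n in atTop, p n) → ∃ᶠ n in atTop, q n)
    (habs : ∀ n, q n → ∀ k, n ≤ k → q k) (hexcl : ∀ n, q n → ¬ p n) :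
    {n | p n}.Finite := by
  by_contra hinf
  have hp : ∃ᶠ n in atTop, p n := Nat.frequently_atTop_iff_infinite.2 hinf
  obtain ⟨n, hn⟩ := (hrec hp).exists
  exact hp ((eventually_ge_atTop n).mono fun k hk => hexcl k (habs n hn k hk))

theorem le_liminf_cesaro_of_eventually_nonneg {f : ℕ → ℝ} {M : ℝ} (hM : ∀ n, f n ≤ M)
    (hf : ∀ᶠ n in atTop, 0 ≤ f n) :
    0 ≤ liminf (fun T : ℕ => (∑ t ∈ range T, f t) / T) atTop := by
  obtain ⟨T₀, hT₀⟩ := eventually_atTop.1 hf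
  set c := ∑ t ∈ range T₀, f t
  have hlow : ∀ᶠ T : ℕ in atTop, c / T ≤ (∑ t ∈ range T, f t) / T := by
    filter_upwards [eventually_ge_atTop T₀] with T hT
    gcongr
    rw [← sum_range_add_sum_Ico _ hT]
    exact le_add_of_nonneg_right (sum_nonneg fun t ht => hT₀ t (mem_Ico.1 ht).1)
  have hup : ∀ᶠ T : ℕ in atTop, (∑ t ∈ range T, f t) / T ≤ M := by
    filter_upwards [eventually_gt_atTop 0] with T hT
    rw [div_le_iff₀ (by positivity), mul_comm]
    simpa using sum_le_sum fun t (_ : t ∈ range T) => hM t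
  have hc := tendsto_const_div_atTop_nhds_zero_nat c
  calc 0 = liminf (fun T : ℕ => c / T) atTop := hc.liminf_eq.symm
    _ ≤ _ := liminf_le_liminf hlow hc.isBoundedUnder_ge
        (isCoboundedUnder_ge_of_eventually_le atTop hup)

theorem payoff_eq_of_apply_eq {N : ℕ} {A : Fin N → Type*} [∀ k, DecidableEq (A k)]
    {s : (∀ k, A k) → ℝ} {j : Fin N} {aH : A j} {rH : ℝ}
    (hH : ∀ a : ∀ k, A k, s (Function.update a j aH) = rH) {a : ∀ k, A k} (ha : a j = aH) :
    s a = rH := by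
  simpa [← ha] using hH a

section Game

variable {N : ℕ} {A : Fin N → Type*} [∀ k, Fintype (A k)] [∀ k, DecidableEq (A k)]
  {s : (∀ k, A k) → ℝ} {j : Fin N} {ε : ℝ}

/-- The paper's transition probability `T_ε(aj | b)` of the ε-Imitate-If-Better strategy. -/
noncomputable def epsIIB (s : (∀ k, A k) → ℝ) (j : Fin N) (ε : ℝ) (aj : A j)
    (b : (∀ k, A k) × (∀ k, A k)) : ℝ :=
  ((1 - ε) * (if aj = b.2 j then 1 else 0) + ε / (Fintype.card (A j))) *
      (if s b.1 < s b.2 then 1 else 0) +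
    (if aj = b.1 j then 1 else 0) * (if s b.1 ≥ s b.2 then 1 else 0)

theorem div_card_le_epsIIB_of_lt (hε1 : ε ≤ 1) (aj : A j) {b : (∀ k, A k) × (∀ k, A k)}
    (hb : s b.1 < s b.2) : ε / Fintype.card (A j) ≤ epsIIB s j ε aj b := by
  have : 0 ≤ (1 - ε) * (if aj = b.2 j then 1 else 0) :=
    mul_nonneg (by linarith) (by split_ifs <;> norm_num)
  simp only [epsIIB, if_pos hb, if_neg (not_le.2 hb)]
  linarith

theorem epsIIB_nonneg (hε0 : 0 ≤ ε) (hε1 : ε ≤ 1) (aj : A j) (b : (∀ k, A k) × (∀ k, A k)) :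
    0 ≤ epsIIB s j ε aj b := by
  by_cases hb : s b.1 < s b.2
  · exact (div_nonneg hε0 (Nat.cast_nonneg _)).trans (div_card_le_epsIIB_of_lt hε1 aj hb)
  · simp only [epsIIB, if_neg hb, if_pos (not_lt.1 hb)]
    split_ifs <;> norm_num

theorem epsIIB_self_of_le {b : (∀ k, A k) × (∀ k, A k)} (hb : s b.2 ≤ s b.1) :
    epsIIB s j ε (b.1 j) b = 1 := by
  simp [epsIIB, not_lt.2 hb, hb]

end Game

theorem epsIIB_unbeatable_in_weakly_payoff_monotonic_general
    {N : ℕ} (A : Fin N → Type*)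
    [∀ k, Fintype (A k)] [∀ k, DecidableEq (A k)]
    (j : Fin N) (s : (∀ k, A k) → ℝ)
    (ε : ℝ) (hε0 : 0 < ε) (hε1 : ε ≤ 1)
    (aH : A j) (rH rL : ℝ)
    (hH : ∀ a : ∀ k, A k, s (Function.update a j aH) = rH)
    (hbound : ∀ b : ∀ k, A k, rL ≤ s b ∧ s b ≤ rH)
    {Ω : Type*} [m0 : MeasurableSpace Ω]
    (P : MeasureTheory.Measure Ω) [MeasureTheory.IsProbabilityMeasure P]
    (F : MeasureTheory.Filtration ℕ m0)
    (X : ℕ → Ω → ((∀ k, A k) × (∀ k, A k)))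
    (hmeas : ∀ (t : ℕ) (b : (∀ k, A k) × (∀ k, A k)),
      MeasurableSet[F t] {ω | X t ω = b})
    (hstep : ∀ (t : ℕ) (aj : A j) (C : Set Ω), MeasurableSet[F t] C →
      (P ({ω | (X (t + 1) ω).1 j = aj} ∩ C)).toReal =
        ∫ ω in C,
          (((1 - ε) * (if aj = (X t ω).2 j then 1 else 0) +
              ε / (Fintype.card (A j))) *
            (if s (X t ω).1 < s (X t ω).2 then 1 else 0) +
          (if aj = (X t ω).1 j then 1 else 0) *
            (if s (X t ω).1 ≥ s (X t ω).2 then 1 else 0)) ∂P) :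
    ∀ᵐ ω ∂P,
      {t : ℕ | s (X t ω).1 < s (X t ω).2}.Finite ∧
      0 ≤ Filter.liminf
          (fun T : ℕ => (∑ t ∈ Finset.range T, (s (X t ω).1 - s (X t ω).2)) / T)
          Filter.atTop := by
  set H : ℕ → Set Ω := fun n => {ω | (X n ω).1 j = aH}
  set B : ℕ → Set Ω := fun n => {ω | s (X n ω).1 < s (X n ω).2}
  have hHm n : MeasurableSet[F n] (H n) :=
    measurableSet_setOf_comp_of_measurableSet_fiber (hmeas n) fun b => b.1 j = aH
  have hH_unbeaten n ω (hω : ω ∈ H n) : s (X n ω).2 ≤ s (X n ω).1 :=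
    payoff_eq_of_apply_eq hH hω ▸ (hbound _).2
  have hδ : 0 < ε / Fintype.card (A j) :=
    div_pos hε0 (Nat.cast_pos.2 (Fintype.card_pos_iff.2 ⟨aH⟩))
  have hcond n : P[(H (n + 1)).indicator 1 | F n] =ᵐ[P] fun ω => epsIIB s j ε aH (X n ω) :=
    condExp_indicator_ae_eq_of_forall_measureReal_inter_eq (F.le n) (F.le _ _ (hHm _))
      (measurable_comp_of_measurableSet_fiber (hmeas n) _).stronglyMeasurable
      (integrable_comp_of_measurableSet_fiber (fun b => F.le n _ (hmeas n b)) _)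
      (hstep n aH)
  have hrecurrent : ∀ᵐ ω ∂P, ω ∈ limsup B atTop → ω ∈ limsup H atTop :=
    ae_mem_limsup_of_indicator_le_condExp hHm hδ fun n => (hcond n).mono fun ω hω => by
      rw [hω, Set.indicator_apply]
      split_ifs with hb
      exacts [div_card_le_epsIIB_of_lt hε1 aH hb, epsIIB_nonneg hε0.le hε1 aH _]
  have habsorbing : ∀ᵐ ω ∂P, ∀ n, ω ∈ H n → ∀ k, n ≤ k → ω ∈ H k := by
    refine ae_forall_le_mem_of_measure_sdiff_succ fun n =>
      measure_sdiff_eq_zero_of_measureReal_inter_eq (F.le _ _ (hHm (n + 1))) ?_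
    calc P.real (H n ∩ H (n + 1)) = ∫ ω in H n, epsIIB s j ε aH (X n ω) ∂P := by
          rw [Set.inter_comm]; exact hstep n aH (H n) (hHm n)
      _ = ∫ ω in H n, 1 ∂P := setIntegral_congr_fun (F.le _ _ (hHm n)) fun ω hω =>
          hω ▸ epsIIB_self_of_le (hH_unbeaten n ω hω)
      _ = P.real (H n) := by simp
  filter_upwards [hrecurrent, habsorbing] with ω hrec habs
  have hfin : {t | s (X t ω).1 < s (X t ω).2}.Finite :=
    finite_setOf_of_frequently_imp_absorbing
      (fun h => mem_limsup_iff_frequently_mem.1 (hrec (mem_limsup_iff_frequently_mem.2 h)))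
      habs fun n hn => not_lt.2 (hH_unbeaten n ω hn)
  refine ⟨hfin, le_liminf_cesaro_of_eventually_nonneg (M := rH - rL) (fun t => ?_) ?_⟩
  · linarith [(hbound (X t ω).1).2, (hbound (X t ω).2).1]
  · rw [← Nat.cofinite_eq_atTop]
    exact hfin.eventually_cofinite_notMem.mono fun t ht => sub_nonneg.2 (not_lt.1 ht)

/-- Theorem 6 of the paper: in a weakly payoff-monotonic game for
player `(1, j)` with top action `aH`, the ε-Imitate-If-Better strategy is unbeatable
against player `(2, j)`: almost surely the player is beaten in only finitely many
rounds, and hence the time-averaged payoff difference has nonnegative liminf.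
`X t` is the (random) full action profile of round `t + 1`; measurability of `X t`
with respect to `F t` is expressed via preimages of singletons (the action space is
finite and discrete). -/
theorem epsIIB_unbeatable_in_weakly_payoff_monotonic
    {N : ℕ} (hN : 2 ≤ N) (A : Fin N → Type*)
    [∀ k, Fintype (A k)] [∀ k, Nonempty (A k)] [∀ k, DecidableEq (A k)]
    (j : Fin N) (s : (∀ k, A k) → ℝ)
    (ε : ℝ) (hε0 : 0 < ε) (hε1 : ε ≤ 1)
    (aH aL : A j) (rH rL : ℝ) (hr : rL ≤ rH)
    (hH : ∀ a : ∀ k, A k, s (Function.update a j aH) = rH)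
    (hL : ∀ a : ∀ k, A k, s (Function.update a j aL) = rL)
    (hbound : ∀ b : ∀ k, A k, rL ≤ s b ∧ s b ≤ rH)
    {Ω : Type*} [m0 : MeasurableSpace Ω]
    (P : MeasureTheory.Measure Ω) [MeasureTheory.IsProbabilityMeasure P]
    (F : MeasureTheory.Filtration ℕ m0)
    (X : ℕ → Ω → ((∀ k, A k) × (∀ k, A k)))
    (hmeas : ∀ (t : ℕ) (b : (∀ k, A k) × (∀ k, A k)),
      MeasurableSet[F t] {ω | X t ω = b})
    (hstep : ∀ (t : ℕ) (aj : A j) (C : Set Ω), MeasurableSet[F t] C →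
      (P ({ω | (X (t + 1) ω).1 j = aj} ∩ C)).toReal =
        ∫ ω in C,
          (((1 - ε) * (if aj = (X t ω).2 j then 1 else 0) +
              ε / (Fintype.card (A j))) *
            (if s (X t ω).1 < s (X t ω).2 then 1 else 0) +
          (if aj = (X t ω).1 j then 1 else 0) *
            (if s (X t ω).1 ≥ s (X t ω).2 then 1 else 0)) ∂P) :
    ∀ᵐ ω ∂P,
      {t : ℕ | s (X t ω).1 < s (X t ω).2}.Finite ∧
      0 ≤ Filter.liminf
          (fun T : ℕ => (∑ t ∈ Finset.range T, (s (X t ω).1 - s (X t ω).2)) / T)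
          Filter.atTop :=
  epsIIB_unbeatable_in_weakly_payoff_monotonic_general A j s ε hε0 hε1 aH rH rL hH hbound (m0 := m0)
    P F X hmeas hstep
end
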